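/- In the polynomial ring ℂ[ℓ,w], the radical of the ideal J generated by w·(w − ℓ²) and ℓ³·w equals the principal ideal ⟨w⟩, and ⟨w⟩ is a prime ideal of ℂ[ℓ,w]. Consequently the nilradical of R = ℂ[ℓ,w]/J is the ideal generated by the image of w, this nilradical is prime, and Spec R is irreducible. -/

import Mathlib

/-! `J ⊆ ⟨w⟩` and `w⁴ ∈ J`; since `w` is a prime element, the radical of `J` is squeezed between
`⟨w⟩` and `√⟨w⟩ = ⟨w⟩`. The statements about `R = ℂ[ℓ,w]/J` follow by pushing the radical to
the quotient, where it becomes the nilradical. -/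

open MvPolynomial

noncomputable section

/-- The polynomial ring `ℂ[ℓ,w]` in two variables: `X 0 = ℓ`, `X 1 = w`. -/
abbrev R2 : Type := MvPolynomial (Fin 2) ℂ

/-- `ℓ` -/
def l : R2 := X 0

/-- `w` -/
def w : R2 := X 1

/-- The ideal `J = ⟨w(w − ℓ²), ℓ³w⟩`. -/
def J : Ideal R2 := Ideal.span {w * (w - l ^ 2), l ^ 3 * w}

namespace Ideal

variable {R : Type*} [CommRing R]

theorem IsPrime.radical_eq_of_le {I P : Ideal R} (hP : P.IsPrime) (hI : I ≤ P)
    (hPI : P ≤ I.radical) : I.radical = P :=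
  le_antisymm (hP.radical_le_iff.mpr hI) hPI

theorem nilradical_quotient_eq_map_radical (I : Ideal R) :
    nilradical (R ⧸ I) = I.radical.map (Quotient.mk I) := by
  rw [map_radical_of_surjective Quotient.mk_surjective mk_ker.le, map_quotient_self]
  rfl

theorem isPrime_nilradical_quotient {I : Ideal R} (h : I.radical.IsPrime) :
    (nilradical (R ⧸ I)).IsPrime := by
  rw [nilradical_quotient_eq_map_radical]
  exact map_isPrime_of_surjective Quotient.mk_surjective (mk_ker.le.trans le_radical)

end Ideal

theorem prime_w : Prime w := X_prime

theorem J_le_span_w : J ≤ Ideal.span {w} := by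
  rw [J, Ideal.span_le]
  rintro x (rfl | rfl)
  · exact Ideal.mem_span_singleton.mpr (dvd_mul_right w (w - l ^ 2))
  · exact Ideal.mem_span_singleton.mpr (dvd_mul_left w (l ^ 3))

-- `w⁴ = (w² + ℓ²w + ℓ⁴) · w(w − ℓ²) + ℓ³ · ℓ³w`, from `w³ − ℓ⁶ = (w − ℓ²)(w² + ℓ²w + ℓ⁴)`.
theorem w_mem_radical_J : w ∈ J.radical :=
  ⟨4, Ideal.mem_span_pair.mpr ⟨w ^ 2 + l ^ 2 * w + l ^ 4, l ^ 3, by ring⟩⟩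

/-- The radical of `J` is the prime ideal `⟨w⟩`; consequently the nilradical of
`R = ℂ[ℓ,w]/J` is generated by the image of `w`, it is prime, and `Spec R` is irreducible. -/
theorem radical_J_eq_span_w :
    J.radical = Ideal.span {w} ∧ (Ideal.span {w} : Ideal R2).IsPrime ∧
      nilradical (R2 ⧸ J) = Ideal.span {Ideal.Quotient.mk J w} ∧
      (nilradical (R2 ⧸ J)).IsPrime ∧
      IrreducibleSpace (PrimeSpectrum (R2 ⧸ J)) := by
  have hprime : (Ideal.span {w} : Ideal R2).IsPrime :=
    (Ideal.span_singleton_prime prime_w.ne_zero).mpr prime_w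
  have hrad : J.radical = Ideal.span {w} :=
    hprime.radical_eq_of_le J_le_span_w ((Ideal.span_singleton_le_iff_mem _).mpr w_mem_radical_J)
  have hnil : (nilradical (R2 ⧸ J)).IsPrime :=
    Ideal.isPrime_nilradical_quotient (hrad ▸ hprime)
  refine ⟨hrad, hprime, ?_, hnil, PrimeSpectrum.irreducibleSpace_iff_isPrime_nilradical.mpr hnil⟩
  rw [Ideal.nilradical_quotient_eq_map_radical, hrad, Ideal.map_span, Set.image_singleton]
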